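/- For every γ ∈ (0,1) the improper integral ∫₀^∞ sin(h)/h^{1+γ} dh is strictly positive, and the two-dimensional integral satisfies ∫_{ℝ²} h₁ sin(h₁)/(h₁²+h₂²)^{(3+γ)/2} dh₁ dh₂ = K_γ · 2∫₀^∞ sin(h)/h^{1+γ} dh, where K_γ = ∫_ℝ (1+λ²)^{−(3+γ)/2} dλ; in particular ∫_{ℝ²} h₁ sin(h₁)/(h₁²+h₂²)^{(3+γ)/2} dh₁ dh₂ > 0. -/

import Mathlib

noncomputable section

open Real MeasureTheory Filter Metric
open scoped ENNReal NNReal Topology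

/-- The plane `ℝ²` with the Euclidean metric. -/
abbrev E2 : Type := EuclideanSpace ℝ (Fin 2)

/-- The point of `ℝ²` with cartesian coordinates `(a, b)`. -/
def pt (a b : ℝ) : E2 := !₂[a, b]

/-- The angular coordinate of a point of the plane. -/
def ang (x : E2) : ℝ := Complex.arg (x 0 + x 1 * Complex.I)

/-- Partial derivative in the `x₁` direction. -/
def pdx (f : E2 → ℝ) : E2 → ℝ := fun x => fderiv ℝ f x (pt 1 0)

/-- Partial derivative in the `x₂` direction. -/
def pdy (f : E2 → ℝ) : E2 → ℝ := fun x => fderiv ℝ f x (pt 0 1)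

/-- Mixed partial derivative `∂^{a+b} f / ∂x₁^a ∂x₂^b`. -/
def pdMix (a b : ℕ) (f : E2 → ℝ) : E2 → ℝ := pdx^[a] (pdy^[b] f)

/-- Directional derivative in direction `u`. -/
def dirD (u : E2) (f : E2 → ℝ) : E2 → ℝ := fun x => fderiv ℝ f x u

/-- The `C^m` norm of a function on the plane: sum of sup norms of all partial
derivatives of order at most `m` (valued in `ℝ≥0∞`). -/
def cknorm (m : ℕ) (f : E2 → ℝ) : ℝ≥0∞ :=
  ∑ i ∈ Finset.range (m+1), ∑ j ∈ Finset.range (i+1),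
    ⨆ x : E2, ENNReal.ofReal |pdMix j (i-j) f x|

/-- The `β`-Hölder seminorm of the `k`-th derivatives of `f`. -/
def holderSemi (k : ℕ) (β : ℝ) (f : E2 → ℝ) : ℝ≥0∞ :=
  ∑ j ∈ Finset.range (k+1),
    ⨆ (x : E2) (y : E2) (_ : x ≠ y),
      ENNReal.ofReal (|pdMix j (k-j) f x - pdMix j (k-j) f y| / dist x y ^ β)

/-- The `C^{k,β}` Hölder norm. -/
def holderNorm (k : ℕ) (β : ℝ) (f : E2 → ℝ) : ℝ≥0∞ := cknorm k f + holderSemi k β f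

/-- `C^m` norm restricted to a set `A` (with essential suprema). -/
def cknormOn (m : ℕ) (A : Set E2) (f : E2 → ℝ) : ℝ≥0∞ :=
  ∑ i ∈ Finset.range (m+1), ∑ j ∈ Finset.range (i+1),
    essSup (fun x => ENNReal.ofReal |pdMix j (i-j) f x|) (volume.restrict A)

/-- `H^m`-type norm restricted to a set `A`: sum of the `L²(A)` norms of the
partial derivatives of order at most `m`. -/
def l2On (m : ℕ) (A : Set E2) (f : E2 → ℝ) : ℝ≥0∞ :=
  ∑ i ∈ Finset.range (m+1), ∑ j ∈ Finset.range (i+1),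
    (∫⁻ x in A, (ENNReal.ofReal |pdMix j (i-j) f x|) ^ 2) ^ (1/2 : ℝ)

/-- The Fourier transform of a function on the plane. -/
def FT2 (f : E2 → ℂ) (ξ : E2) : ℂ :=
  ∫ x : E2, Complex.exp (-(2 * π * (inner ℝ x ξ : ℝ)) * Complex.I) * f x

/-- The (inhomogeneous) Sobolev norm `‖f‖_{H^s}² = ∫ (1+|ξ|²)^s |f̂(ξ)|² dξ`. -/
def sobNorm (s : ℝ) (f : E2 → ℝ) : ℝ≥0∞ :=
  (∫⁻ ξ : E2, ENNReal.ofReal ((1 + ‖ξ‖^2) ^ s) *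
      (‖FT2 (fun x => (f x : ℂ)) ξ‖₊ : ℝ≥0∞) ^ 2) ^ (1/2 : ℝ)

/-- First component of the `γ`-SQG velocity,
`v_{1,γ}(w)(x) = P.V.∫ (y₂−x₂) w(y)/|x−y|^{3+γ} dy`. -/
def v1G (γ : ℝ) (w : E2 → ℝ) (x : E2) : ℝ :=
  limUnder (𝓝[>] (0:ℝ)) fun ε =>
    ∫ y in {y : E2 | ε ≤ dist x y}, (y 1 - x 1) * w y / dist x y ^ (3+γ)

/-- Second component of the `γ`-SQG velocity,
`v_{2,γ}(w)(x) = P.V.∫ (x₁−y₁) w(y)/|x−y|^{3+γ} dy`. -/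
def v2G (γ : ℝ) (w : E2 → ℝ) (x : E2) : ℝ :=
  limUnder (𝓝[>] (0:ℝ)) fun ε =>
    ∫ y in {y : E2 | ε ≤ dist x y}, (x 0 - y 0) * w y / dist x y ^ (3+γ)

/-- The `γ`-SQG velocity `v_γ(w)(x) = P.V.∫ (x−y)^⊥ w(y)/|x−y|^{3+γ} dy`. -/
def vG (γ : ℝ) (w : E2 → ℝ) (x : E2) : E2 := pt (v1G γ w x) (v2G γ w x)

/-- Radial component of the velocity. -/
def vr (γ : ℝ) (w : E2 → ℝ) (x : E2) : ℝ :=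
  Real.cos (ang x) * v1G γ w x + Real.sin (ang x) * v2G γ w x

/-- Angular component of the velocity. -/
def va (γ : ℝ) (w : E2 → ℝ) (x : E2) : ℝ :=
  Real.cos (ang x) * v2G γ w x - Real.sin (ang x) * v1G γ w x

/-- `w` is a (pointwise classical) solution of the `γ`-SQG equation
`∂_t w + v_γ(w)·∇w = 0` on the time interval `[0,T]`. -/
def IsSQGSol (γ T : ℝ) (w : ℝ → E2 → ℝ) : Prop :=
  ∀ t ∈ Set.Icc (0:ℝ) T, ∀ x : E2,
    HasDerivAt (fun τ => w τ x)
      (-(inner ℝ (vG γ (w t) x) (gradient (w t) x) : ℝ)) t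

/-- `w` is a solution of `∂_t w + (v_γ(w)+ve)·∇w = 0` on `[0,T]`. -/
def IsPertSQGSol (γ T : ℝ) (ve : E2 → E2) (w : ℝ → E2 → ℝ) : Prop :=
  ∀ t ∈ Set.Icc (0:ℝ) T, ∀ x : E2,
    HasDerivAt (fun τ => w τ x)
      (-(inner ℝ (vG γ (w t) x + ve x) (gradient (w t) x) : ℝ)) t

/-- Polar-coordinates representation `f^pol(r,α) = f(r cos α, r sin α)`. -/
def wP (w : E2 → ℝ) (r α : ℝ) : ℝ := w (pt (r * Real.cos α) (r * Real.sin α))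

/-- Partial derivative in the first (radial) variable of a two-variable function. -/
def pdR (F : ℝ → ℝ → ℝ) : ℝ → ℝ → ℝ := fun r α => deriv (fun s => F s α) r

/-- Partial derivative in the second (angular) variable of a two-variable function. -/
def pdA (F : ℝ → ℝ → ℝ) : ℝ → ℝ → ℝ := fun r α => deriv (fun s => F r s) α

/-- Mixed partial derivatives of a two-variable function. -/
def pdPol (a b : ℕ) (F : ℝ → ℝ → ℝ) : ℝ → ℝ → ℝ := pdR^[a] (pdA^[b] F)

/-- `C^m` norm of a function of two real variables. -/
def c2norm (m : ℕ) (F : ℝ → ℝ → ℝ) : ℝ≥0∞ :=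
  ∑ i ∈ Finset.range (m+1), ∑ j ∈ Finset.range (i+1),
    ⨆ p : ℝ × ℝ, ENNReal.ofReal |pdPol j (i-j) F p.1 p.2|

/-- The set `B^pol_ρ(r,α) − (r,α)`: pairs `(h,α′)` such that `(r+h, α+α′)`
lies in the polar ball of radius `ρ` around `(r,α)`. -/
def polarShift (ρ r α : ℝ) : Set (ℝ × ℝ) :=
  {p : ℝ × ℝ |
    dist (pt ((r + p.1) * Real.cos (α + p.2)) ((r + p.1) * Real.sin (α + p.2)))
      (pt (r * Real.cos α) (r * Real.sin α)) ≤ ρ}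

/-- The radial extension of `f1 : ℝ → ℝ` to the plane. -/
def radial (f1 : ℝ → ℝ) : E2 → ℝ := fun x => f1 ‖x‖

/-- The constant `C_γ = −K_γ · 2∫₀^∞ sin h / h^{1+γ} dh < 0`,
with `K_γ = ∫_ℝ (1+λ²)^{−(3+γ)/2} dλ`. -/
def Cgam (γ : ℝ) : ℝ :=
  -((∫ l : ℝ, (1 + l^2) ^ (-(3+γ)/2)) * (2 * ∫ h in Set.Ioi (0:ℝ), Real.sin h / h ^ (1+γ)))

/-- The angular velocity `V = v_{α,γ}(f₁)(r=1)` generated by the radial profile `f₁`. -/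
def Vang (γ : ℝ) (f1 : ℝ → ℝ) : ℝ := va γ (radial f1) (pt 1 0)

/-- `λ₀ = π M^{1−γ} / (2 t̃ N^γ C_γ γ)`. -/
def lam0 (γ tt N : ℝ) (M : ℕ) : ℝ := π * (M:ℝ) ^ (1-γ) / (2 * tt * N ^ γ * Cgam γ * γ)

/-- `M_j = M (1 + j/J)`. -/
def Mjj (M J j : ℕ) : ℝ := (M:ℝ) * (1 + (j:ℝ)/(J:ℝ))

/-- `λ_j = λ (1 + j/J)^β`. -/
def lamjj (lam β : ℝ) (J j : ℕ) : ℝ := lam * (1 + (j:ℝ)/(J:ℝ)) ^ β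

/-- `α¹_j = (π/(2N))(1+j/J)^{−1+γ} − t̃ λ₀ V`. -/
def a1jj (γ tt N : ℝ) (M J : ℕ) (f1 : ℝ → ℝ) (j : ℕ) : ℝ :=
  (π/(2*N)) * (1 + (j:ℝ)/(J:ℝ)) ^ (-1+γ) - tt * lam0 γ tt N M * Vang γ f1

/-- `α²_j = −(1/γ−1)(π/2) M (1+j/J)^γ`. -/
def a2jj (γ : ℝ) (M J j : ℕ) : ℝ :=
  -((1/γ - 1) * (π/2) * (M:ℝ) * (1 + (j:ℝ)/(J:ℝ)) ^ γ)

/-- The pseudo-solution `w̄_{λ,N,M,J,L,t̃}` in polar coordinates. -/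
def wbarPol (k : ℕ) (β γ δ lam N tt : ℝ) (M J L : ℕ) (f1 g : ℝ → ℝ) (t r α : ℝ) : ℝ :=
  lam0 γ tt N M * f1 r +
    ∑ j ∈ Finset.Icc 1 J, ∑ l ∈ Finset.range L,
      lamjj lam β J j *
        g (N ^ (1-δ) * (r - 1)) * g (N ^ (1-δ) * (α - t * lam0 γ tt N M * Vang γ f1)) *
        Real.cos (N * (Mjj M J j + l) *
            (α - a1jj γ tt N M J f1 j - t * lam0 γ tt N M * Vang γ f1)
          + a2jj γ M J j + k * π / 2
          + t * lam0 γ tt N M * Cgam γ * N ^ γ * (Mjj M J j + l) ^ γ)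
        / ((J:ℝ) * (L:ℝ) * (N * Mjj M J j) ^ ((k:ℝ) + β))

/-- The pseudo-solution `w̄_{λ,N,M,J,L,t̃}` as a function on the plane. -/
def wbar (k : ℕ) (β γ δ lam N tt : ℝ) (M J L : ℕ) (f1 g : ℝ → ℝ) (t : ℝ) : E2 → ℝ :=
  fun x => wbarPol k β γ δ lam N tt M J L f1 g t ‖x‖ (ang x)

/-- The residual `F = −(∂_t w̄ + v_γ(w̄)·∇w̄)` of the pseudo-solution. -/
def sqgResidual (k : ℕ) (β γ δ lam N tt : ℝ) (M J L : ℕ) (f1 g : ℝ → ℝ)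
    (t : ℝ) (x : E2) : ℝ :=
  -(deriv (fun τ => wbar k β γ δ lam N tt M J L f1 g τ x) t
    + (inner ℝ (vG γ (wbar k β γ δ lam N tt M J L f1 g t) x)
        (gradient (wbar k β γ δ lam N tt M J L f1 g t) x) : ℝ))

/-- Hypotheses on the bump profile `g` defining `f₂(r−1,α) = g(r−1)g(α)`. -/
def BumpHyp (g : ℝ → ℝ) : Prop :=
  ContDiff ℝ (⊤ : ℕ∞) g ∧ (∀ x, 0 ≤ g x) ∧ tsupport g ⊆ Set.Icc (-(1/2) : ℝ) (1/2) ∧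
    (∀ x ∈ Set.Icc (-(1/4) : ℝ) (1/4), g x = 1) ∧
    (∀ m : ℕ, c2norm m (fun u v => g u * g v) ≤ ENNReal.ofReal (100 ^ m))

/-- Hypotheses on the radial profile `f₁`. -/
def F1Hyp (γ : ℝ) (f1 : ℝ → ℝ) : Prop :=
  ContDiff ℝ (⊤ : ℕ∞) f1 ∧ (∀ r ∈ Set.Icc (3/4 : ℝ) (5/4), deriv f1 r = 1) ∧
    (∃ Kγ : ℝ, tsupport f1 ⊆ Set.Ioo (1/2) Kγ) ∧
    iteratedDeriv 1 (fun r => va γ (radial f1) (pt r 0) / r) 1 = 0 ∧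
    iteratedDeriv 2 (fun r => va γ (radial f1) (pt r 0) / r) 1 = 0

/-- Divergence-free condition for a velocity field on the plane. -/
def DivFree (ve : E2 → E2) : Prop :=
  ∀ x, pdx (fun y => ve y 0) x + pdy (fun y => ve y 1) x = 0

/-- `C^m` norm of a vector field on the plane. -/
def cknormV (m : ℕ) (ve : E2 → E2) : ℝ≥0∞ :=
  cknorm m (fun y => ve y 0) + cknorm m (fun y => ve y 1)


section CgammaHelpers
open Set
namespace CgamAux
variable {γ : ℝ}


lemma integrableOn_Ioi_of_rpow_bounds {f : ℝ → ℝ}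
    (hm : AEStronglyMeasurable f (volume.restrict (Ioi 0)))
    {c1 c2 p q : ℝ} (hp : -1 < p) (hq : q < -1)
    (h1 : ∀ h ∈ Ioc (0:ℝ) 1, ‖f h‖ ≤ c1 * h ^ p)
    (h2 : ∀ h ∈ Ioi (1:ℝ), ‖f h‖ ≤ c2 * h ^ q) :
    IntegrableOn f (Ioi (0:ℝ)) := by
  rw [← Ioc_union_Ioi_eq_Ioi (zero_le_one (α := ℝ))]
  apply IntegrableOn.union
  · have hint : IntegrableOn (fun h : ℝ => c1 * h ^ p) (Ioc (0:ℝ) 1) := by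
      rw [← intervalIntegrable_iff_integrableOn_Ioc_of_le zero_le_one]
      exact (intervalIntegral.intervalIntegrable_rpow' hp).const_mul c1
    refine Integrable.mono' hint (hm.mono_set Ioc_subset_Ioi_self) ?_
    exact (ae_restrict_iff' measurableSet_Ioc).mpr (Filter.Eventually.of_forall h1)
  · have hint : IntegrableOn (fun h : ℝ => c2 * h ^ q) (Ioi (1:ℝ)) :=
      (integrableOn_Ioi_rpow_of_lt hq one_pos).const_mul c2
    refine Integrable.mono' hint (hm.mono_set (Ioi_subset_Ioi zero_le_one)) ?_
    exact (ae_restrict_iff' measurableSet_Ioi).mpr (Filter.Eventually.of_forall h2)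


lemma meas_sin : AEStronglyMeasurable (fun h : ℝ => Real.sin h * h ^ (-(1+γ)))
    (volume.restrict (Ioi 0)) := by
  apply Measurable.aestronglyMeasurable
  fun_prop

lemma integrableOn_sin_rpow (hγ0 : 0 < γ) (hγ1 : γ < 1) :
    IntegrableOn (fun h : ℝ => Real.sin h * h ^ (-(1+γ))) (Ioi (0:ℝ)) := by
  apply integrableOn_Ioi_of_rpow_bounds meas_sin (p := -γ) (q := -(1+γ)) (c1 := 1) (c2 := 1)
    (by linarith) (by linarith)
  · intro h hx
    have h0 : (0:ℝ) < h := hx.1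
    calc ‖Real.sin h * h ^ (-(1+γ))‖ = |Real.sin h| * h ^ (-(1+γ)) := by
          rw [norm_mul, Real.norm_eq_abs, Real.norm_eq_abs,
            abs_of_nonneg (rpow_nonneg h0.le _)]
      _ ≤ |h| * h ^ (-(1+γ)) :=
          mul_le_mul_of_nonneg_right Real.abs_sin_le_abs (rpow_nonneg h0.le _)
      _ = h ^ ((1:ℝ) + -(1+γ)) := by
          rw [abs_of_pos h0, Real.rpow_add h0, Real.rpow_one]
      _ ≤ 1 * h ^ (-γ) := by rw [one_mul]; apply le_of_eq; congr 1; ring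
  · intro h hx
    have h0 : (0:ℝ) < h := lt_trans one_pos hx
    calc ‖Real.sin h * h ^ (-(1+γ))‖ = |Real.sin h| * h ^ (-(1+γ)) := by
          rw [norm_mul, Real.norm_eq_abs, Real.norm_eq_abs,
            abs_of_nonneg (rpow_nonneg h0.le _)]
      _ ≤ 1 * h ^ (-(1+γ)) :=
          mul_le_mul_of_nonneg_right (Real.abs_sin_le_one h) (rpow_nonneg h0.le _)

lemma integrableOn_cos_term (hγ0 : 0 < γ) (hγ1 : γ < 1) :
    IntegrableOn (fun h : ℝ => (1 - Real.cos h) * (-(1+γ) * h ^ (-(1+γ) - 1)))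
      (Ioi (0:ℝ)) := by
  apply integrableOn_Ioi_of_rpow_bounds (by apply Measurable.aestronglyMeasurable; fun_prop)
    (p := -γ) (q := -(1+γ) - 1) (c1 := (1+γ)/2) (c2 := 2*(1+γ))
    (by linarith) (by linarith)
  · intro h hx
    have h0 : (0:ℝ) < h := hx.1
    have hc : |1 - Real.cos h| ≤ h^2 / 2 := by
      rw [abs_of_nonneg (by linarith [Real.cos_le_one h])]
      have := Real.one_sub_sq_div_two_le_cos (x := h)
      linarith
    calc ‖(1 - Real.cos h) * (-(1+γ) * h ^ (-(1+γ) - 1))‖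
        = |1 - Real.cos h| * ((1+γ) * h ^ (-(1+γ) - 1)) := by
          rw [norm_mul, Real.norm_eq_abs, Real.norm_eq_abs, abs_mul, abs_neg,
            abs_of_nonneg (by linarith : (0:ℝ) ≤ 1+γ),
            abs_of_nonneg (rpow_nonneg h0.le _)]
      _ ≤ (h^2/2) * ((1+γ) * h ^ (-(1+γ) - 1)) := by
          gcongr
      _ = (1+γ)/2 * (h ^ ((2:ℝ) + (-(1+γ) - 1))) := by
          rw [Real.rpow_add h0, ← Real.rpow_natCast h 2]
          push_cast
          ring
      _ ≤ (1+γ)/2 * h ^ (-γ) := by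
          apply le_of_eq; congr 1; ring
  · intro h hx
    have h0 : (0:ℝ) < h := lt_trans one_pos hx
    calc ‖(1 - Real.cos h) * (-(1+γ) * h ^ (-(1+γ) - 1))‖
        = |1 - Real.cos h| * ((1+γ) * h ^ (-(1+γ) - 1)) := by
          rw [norm_mul, Real.norm_eq_abs, Real.norm_eq_abs, abs_mul, abs_neg,
            abs_of_nonneg (by linarith : (0:ℝ) ≤ 1+γ),
            abs_of_nonneg (rpow_nonneg h0.le _)]
      _ ≤ 2 * ((1+γ) * h ^ (-(1+γ) - 1)) := by
          gcongr
          rw [abs_of_nonneg (by linarith [Real.cos_le_one h])]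
          have := Real.neg_one_le_cos h
          linarith
      _ = 2*(1+γ) * h ^ (-(1+γ) - 1) := by ring



lemma sin_int_eq (hγ0 : 0 < γ) (hγ1 : γ < 1) :
    (∫ h in Ioi (0:ℝ), Real.sin h * h ^ (-(1+γ)))
      = ∫ h in Ioi (0:ℝ), (1 - Real.cos h) * ((1+γ) * h ^ (-(1+γ) - 1)) := by
  set F : ℝ → ℝ := fun h => (1 - Real.cos h) * h ^ (-(1+γ)) with hF
  set F' : ℝ → ℝ := fun h =>
    Real.sin h * h ^ (-(1+γ)) + (1 - Real.cos h) * (-(1+γ) * h ^ (-(1+γ) - 1)) with hF'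
  have hderiv : ∀ x ∈ Ioi (0:ℝ), HasDerivAt F (F' x) x := by
    intro x hx
    have h1 : HasDerivAt (fun h : ℝ => 1 - Real.cos h) (Real.sin x) x := by
      simpa using (Real.hasDerivAt_cos x).const_sub 1
    have h2 : HasDerivAt (fun h : ℝ => h ^ (-(1+γ))) (-(1+γ) * x ^ (-(1+γ) - 1)) x :=
      Real.hasDerivAt_rpow_const (Or.inl (ne_of_gt hx))
    exact h1.mul h2
  have hcont : ContinuousWithinAt F (Ici 0) 0 := by
    have hF0 : F 0 = 0 := by simp [hF]
    rw [ContinuousWithinAt, hF0]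
    have hb : Tendsto (fun h : ℝ => h ^ (1 - γ) / 2) (nhdsWithin 0 (Ici 0)) (𝓝 0) := by
      have h1 : ContinuousAt (fun h : ℝ => h ^ (1 - γ)) 0 :=
        Real.continuousAt_rpow_const 0 (1-γ) (Or.inr (by linarith))
      have h2 := (h1.tendsto).mono_left (nhdsWithin_le_nhds (s := Ici (0:ℝ)))
      rw [Real.zero_rpow (by linarith : (1:ℝ) - γ ≠ 0)] at h2
      simpa using h2.div_const 2
    apply squeeze_zero' ?_ ?_ hb
    · filter_upwards [self_mem_nhdsWithin] with h (hh : (0:ℝ) ≤ h)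
      exact mul_nonneg (by linarith [Real.cos_le_one h]) (rpow_nonneg hh _)
    · filter_upwards [self_mem_nhdsWithin] with h (hh : (0:ℝ) ≤ h)
      rcases eq_or_lt_of_le hh with rfl | h0
      · simp [hF, Real.zero_rpow (by linarith : (1:ℝ) - γ ≠ 0)]
      · have hc : 1 - Real.cos h ≤ h^2/2 := by
          have := Real.one_sub_sq_div_two_le_cos (x := h); linarith
        calc F h ≤ (h^2/2) * h ^ (-(1+γ)) :=
              mul_le_mul_of_nonneg_right hc (rpow_nonneg h0.le _)
          _ = h ^ ((2:ℝ) + -(1+γ)) / 2 := by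
              rw [Real.rpow_add h0, ← Real.rpow_natCast h 2]; push_cast; ring
          _ = h ^ (1 - γ) / 2 := by congr 2; ring
  have htop : Tendsto F atTop (𝓝 0) := by
    have htt : Tendsto (fun h : ℝ => 2 * h ^ (-(1+γ))) atTop (𝓝 0) := by
      have h2 := (tendsto_rpow_neg_atTop (by linarith : (0:ℝ) < 1+γ)).const_mul (b := 2)
      rw [mul_zero] at h2; exact h2
    apply squeeze_zero_norm' ?_ htt
    filter_upwards [eventually_gt_atTop (0:ℝ)] with h h0
    rw [Real.norm_eq_abs, hF, abs_mul, abs_of_nonneg (rpow_nonneg h0.le _)]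
    have : |1 - Real.cos h| ≤ 2 := by
      have h1 := Real.cos_le_one h; have h2 := Real.neg_one_le_cos h
      rw [abs_le]; constructor <;> linarith
    calc |1 - Real.cos h| * h ^ (-(1+γ)) ≤ 2 * h ^ (-(1+γ)) :=
          mul_le_mul_of_nonneg_right this (rpow_nonneg h0.le _)
      _ = 2 * h ^ (-(1+γ)) := rfl
  have hFint : IntegrableOn F' (Ioi (0:ℝ)) :=
    (integrableOn_sin_rpow hγ0 hγ1).add (integrableOn_cos_term hγ0 hγ1)
  have key : ∫ h in Ioi (0:ℝ), F' h = 0 - F 0 :=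
    integral_Ioi_of_hasDerivAt_of_tendsto hcont hderiv hFint htop
  have hF0 : F 0 = 0 := by simp [hF]
  rw [hF0, sub_zero] at key
  have hsplit : ∫ h in Ioi (0:ℝ), F' h
      = (∫ h in Ioi (0:ℝ), Real.sin h * h ^ (-(1+γ)))
        + ∫ h in Ioi (0:ℝ), (1 - Real.cos h) * (-(1+γ) * h ^ (-(1+γ) - 1)) :=
    integral_add (integrableOn_sin_rpow hγ0 hγ1) (integrableOn_cos_term hγ0 hγ1)
  have hneg : (∫ h in Ioi (0:ℝ), (1 - Real.cos h) * (-(1+γ) * h ^ (-(1+γ) - 1)))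
      = - ∫ h in Ioi (0:ℝ), (1 - Real.cos h) * ((1+γ) * h ^ (-(1+γ) - 1)) := by
    rw [← integral_neg]
    congr 1; funext h; ring
  rw [hsplit, hneg] at key
  linarith


lemma cos_term_pos (hγ0 : 0 < γ) (hγ1 : γ < 1) :
    0 < ∫ h in Ioi (0:ℝ), (1 - Real.cos h) * ((1+γ) * h ^ (-(1+γ) - 1)) := by
  have heq : (fun h : ℝ => (1 - Real.cos h) * ((1+γ) * h ^ (-(1+γ) - 1)))
      = fun h => -((1 - Real.cos h) * (-(1+γ) * h ^ (-(1+γ) - 1))) := by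
    funext h; ring
  have hint : IntegrableOn (fun h : ℝ => (1 - Real.cos h) * ((1+γ) * h ^ (-(1+γ) - 1)))
      (Ioi (0:ℝ)) := by
    rw [heq]; exact (integrableOn_cos_term hγ0 hγ1).neg
  have hnn : 0 ≤ᵐ[volume.restrict (Ioi (0:ℝ))]
      fun h : ℝ => (1 - Real.cos h) * ((1+γ) * h ^ (-(1+γ) - 1)) := by
    refine (ae_restrict_iff' measurableSet_Ioi).mpr (Filter.Eventually.of_forall fun h hh => ?_)
    have h0 : (0:ℝ) < h := hh
    have h1 := Real.cos_le_one h
    apply mul_nonneg (by linarith) (mul_nonneg (by linarith) (rpow_nonneg h0.le _))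
  rw [setIntegral_pos_iff_support_of_nonneg_ae hnn hint]
  have hsub : Ioo (0:ℝ) 1 ⊆
      (Function.support fun h : ℝ => (1 - Real.cos h) * ((1+γ) * h ^ (-(1+γ) - 1))) ∩ Ioi 0 := by
    intro h hh
    have h0 : (0:ℝ) < h := hh.1
    have hcos : Real.cos h < 1 := by
      have := Real.cos_lt_cos_of_nonneg_of_le_pi le_rfl
        (by nlinarith [Real.pi_gt_three, hh.2] : h ≤ π) h0
      rwa [Real.cos_zero] at this
    refine ⟨?_, h0⟩
    have : 0 < (1 - Real.cos h) * ((1+γ) * h ^ (-(1+γ) - 1)) := by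
      have hr : (0:ℝ) < h ^ (-(1+γ) - 1) := rpow_pos_of_pos h0 _
      have h1 : (0:ℝ) < 1 - Real.cos h := by linarith
      positivity
    exact Function.mem_support.mpr (ne_of_gt this)
  calc (0:ℝ≥0∞) < volume (Ioo (0:ℝ) 1) := by simp [Real.volume_Ioo]
    _ ≤ _ := measure_mono hsub

lemma intK (hγ0 : 0 < γ) : Integrable fun l : ℝ => (1 + l^2) ^ (-(3+γ)/2) := by
  apply integrable_inv_one_add_sq.mono
  · apply Measurable.aestronglyMeasurable; fun_prop
  · refine Filter.Eventually.of_forall fun l => ?_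
    have h1 : (0:ℝ) < 1 + l^2 := by positivity
    rw [Real.norm_eq_abs, Real.norm_eq_abs, abs_of_nonneg (rpow_nonneg h1.le _),
      abs_of_nonneg (by positivity : (0:ℝ) ≤ (1 + l^2)⁻¹)]
    calc (1+l^2) ^ (-(3+γ)/2) ≤ (1+l^2) ^ (-1:ℝ) :=
          Real.rpow_le_rpow_of_exponent_le (by nlinarith) (by linarith)
      _ = (1+l^2)⁻¹ := by rw [Real.rpow_neg_one]

lemma Kpos (hγ0 : 0 < γ) : 0 < ∫ l : ℝ, (1 + l^2) ^ (-(3+γ)/2) := by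
  refine (integral_pos_iff_support_of_nonneg
    (fun l => rpow_nonneg (by positivity) _) (intK hγ0)).mpr ?_
  have : (Function.support fun l : ℝ => (1 + l^2) ^ (-(3+γ)/2)) = Set.univ :=
    Set.eq_univ_of_forall fun l => ne_of_gt (rpow_pos_of_pos (by positivity) _)
  rw [this]
  simp

lemma key_scale (hγ0 : 0 < γ) {a : ℝ} (ha : a ≠ 0) (x : ℝ) :
    ((a^2 + (|a| * x)^2) ^ ((3+γ)/2))⁻¹
      = (|a| ^ ((3:ℝ)+γ))⁻¹ * ((1 + x^2) ^ ((3+γ)/2))⁻¹ := by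
  have h1 : a^2 + (|a| * x)^2 = a^2 * (1 + x^2) := by rw [mul_pow, sq_abs]; ring
  rw [h1, Real.mul_rpow (sq_nonneg a) (by positivity), mul_inv]
  congr 2
  rw [← sq_abs a, ← Real.rpow_natCast |a| 2, ← Real.rpow_mul (abs_nonneg a)]
  norm_num
  congr 1
  ring

lemma inv_eq_rpow_neg :
    (fun x : ℝ => ((1 + x^2) ^ ((3+γ)/2))⁻¹) = fun x : ℝ => (1 + x^2) ^ (-(3+γ)/2) := by
  funext x
  rw [neg_div, Real.rpow_neg (by positivity)]

lemma sect_integrable (hγ0 : 0 < γ) {a : ℝ} (ha : a ≠ 0) :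
    Integrable fun y : ℝ => ((a^2 + y^2) ^ ((3+γ)/2))⁻¹ := by
  have habs : |a| ≠ 0 := abs_ne_zero.mpr ha
  refine (integrable_comp_mul_left_iff
    (fun y : ℝ => ((a^2 + y^2) ^ ((3+γ)/2))⁻¹) habs).mp ?_
  show Integrable fun x : ℝ => ((a^2 + (|a| * x)^2) ^ ((3+γ)/2))⁻¹
  simp_rw [key_scale hγ0 ha]
  apply Integrable.const_mul
  rw [inv_eq_rpow_neg]
  exact intK hγ0

lemma sect_value (hγ0 : 0 < γ) {a : ℝ} (ha : a ≠ 0) :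
    (∫ y : ℝ, ((a^2 + y^2) ^ ((3+γ)/2))⁻¹)
      = |a| ^ (-((2:ℝ)+γ)) * ∫ l : ℝ, (1 + l^2) ^ (-(3+γ)/2) := by
  have habs : (0:ℝ) < |a| := abs_pos.mpr ha
  have h := MeasureTheory.Measure.integral_comp_mul_left
    (fun y : ℝ => ((a^2 + y^2) ^ ((3+γ)/2))⁻¹) |a|
  simp_rw [key_scale hγ0 ha] at h
  rw [integral_const_mul, inv_eq_rpow_neg, smul_eq_mul, abs_inv, abs_abs] at h
  -- h : (|a| ^ (3+γ))⁻¹ * ∫ (1+x²)^(-(3+γ)/2) = |a|⁻¹ * ∫ y, f y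
  have h2 : (∫ y : ℝ, ((a^2 + y^2) ^ ((3+γ)/2))⁻¹)
      = |a| * ((|a| ^ ((3:ℝ)+γ))⁻¹ * ∫ l : ℝ, (1 + l^2) ^ (-(3+γ)/2)) := by
    rw [h, ← mul_assoc, mul_inv_cancel₀ (ne_of_gt habs), one_mul]
  rw [h2, ← mul_assoc]
  congr 1
  rw [← Real.rpow_neg (abs_nonneg a)]
  nth_rewrite 1 [← Real.rpow_one |a|]
  rw [← Real.rpow_add habs]
  congr 1
  ring

lemma part1 (hγ0 : 0 < γ) (hγ1 : γ < 1) :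
    0 < ∫ h in Ioi (0:ℝ), Real.sin h / h ^ (1+γ) := by
  have heq : (∫ h in Ioi (0:ℝ), Real.sin h / h ^ (1+γ))
      = ∫ h in Ioi (0:ℝ), Real.sin h * h ^ (-(1+γ)) := by
    refine setIntegral_congr_fun measurableSet_Ioi (fun h hh => ?_)
    rw [Real.rpow_neg (le_of_lt hh), div_eq_mul_inv]
  rw [heq, sin_int_eq hγ0 hγ1]
  exact cos_term_pos hγ0 hγ1


lemma integrable_comp_abs' {f : ℝ → ℝ} (hf : IntegrableOn f (Ioi 0)) :
    Integrable fun x : ℝ => f |x| := by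
  have int_Ioi : IntegrableOn (fun x : ℝ => f |x|) (Ioi 0) :=
    hf.congr_fun (fun x hx => by rw [abs_of_pos hx]) measurableSet_Ioi
  have int_Iic : IntegrableOn (fun x : ℝ => f |x|) (Iic 0) := by
    rw [← Measure.map_neg_eq_self (volume : Measure ℝ)]
    have m : MeasurableEmbedding fun x : ℝ => -x := (Homeomorph.neg ℝ).measurableEmbedding
    rw [m.integrableOn_map_iff]
    simp_rw [Function.comp_def, abs_neg, neg_preimage, neg_Iic, neg_zero]
    exact Iff.mpr integrableOn_Ici_iff_integrableOn_Ioi int_Ioi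
  have h := int_Iic.union int_Ioi
  rwa [Iic_union_Ioi, integrableOn_univ] at h

lemma hae_ne : ∀ᵐ a : ℝ, a ≠ 0 := by
  rw [ae_iff]
  have h : {a : ℝ | ¬a ≠ 0} = {0} := by ext a; simp
  rw [h]
  exact measure_singleton 0

-- abs pow algebra
lemma abs_pow_helper (hγ0 : 0 < γ) {a : ℝ} (ha : a ≠ 0) :
    |a| * |a| ^ (-((2:ℝ)+γ)) = (|a| ^ ((1:ℝ)+γ))⁻¹ := by
  have habs : (0:ℝ) < |a| := abs_pos.mpr ha
  nth_rewrite 1 [← Real.rpow_one |a|]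
  rw [← Real.rpow_add habs, ← Real.rpow_neg (abs_nonneg a)]
  congr 1
  ring

lemma a_sin_eq (a : ℝ) : a * Real.sin a = |a| * Real.sin |a| := by
  rcases le_or_gt 0 a with h | h
  · rw [abs_of_nonneg h]
  · rw [abs_of_neg h, Real.sin_neg]; ring

-- Φ for norms, Ψ for values
lemma PhiInt (hγ0 : 0 < γ) (hγ1 : γ < 1) :
    Integrable fun a : ℝ =>
      (∫ l : ℝ, (1 + l^2) ^ (-(3+γ)/2)) * (abs (Real.sin |a|) * (|a| ^ ((1:ℝ)+γ))⁻¹) := by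
  have h1 : IntegrableOn
      (fun u : ℝ => (∫ l : ℝ, (1 + l^2) ^ (-(3+γ)/2)) * (abs (Real.sin u) * (u ^ ((1:ℝ)+γ))⁻¹))
      (Ioi (0:ℝ)) := by
    apply Integrable.const_mul
    refine IntegrableOn.congr_fun ((integrableOn_sin_rpow hγ0 hγ1).abs) (fun u hu => ?_)
      measurableSet_Ioi
    have h0 : (0:ℝ) < u := hu
    rw [abs_mul, abs_of_nonneg (rpow_nonneg h0.le _), Real.rpow_neg h0.le]
  exact integrable_comp_abs' h1

lemma PsiIntIoi_eq (hγ0 : 0 < γ) :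
    (∫ u in Ioi (0:ℝ),
        (∫ l : ℝ, (1 + l^2) ^ (-(3+γ)/2)) * (Real.sin u * (u ^ ((1:ℝ)+γ))⁻¹))
      = (∫ l : ℝ, (1 + l^2) ^ (-(3+γ)/2)) * ∫ h in Ioi (0:ℝ), Real.sin h / h ^ (1+γ) := by
  rw [integral_const_mul]
  congr 1

theorem main (hγ0 : 0 < γ) (hγ1 : γ < 1) :
    (∫ p : ℝ × ℝ, p.1 * Real.sin p.1 / (p.1^2 + p.2^2) ^ ((3+γ)/2)) =
      (∫ l : ℝ, (1 + l^2) ^ (-(3+γ)/2)) *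
        (2 * ∫ h in Set.Ioi (0:ℝ), Real.sin h / h ^ (1+γ)) := by
  set K := ∫ l : ℝ, (1 + l^2) ^ (-(3+γ)/2) with hK
  set F2 : ℝ × ℝ → ℝ := fun p => p.1 * Real.sin p.1 / (p.1^2 + p.2^2) ^ ((3+γ)/2) with hF2
  have hmeas : AEStronglyMeasurable F2 ((volume : Measure ℝ).prod volume) := by
    apply Measurable.aestronglyMeasurable
    fun_prop
  -- sections
  have hsect : ∀ a : ℝ, a ≠ 0 → Integrable (fun y => F2 (a, y)) := by
    intro a ha
    have : (fun y : ℝ => F2 (a, y))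
        = fun y => (a * Real.sin a) * ((a^2 + y^2) ^ ((3+γ)/2))⁻¹ := by
      funext y; simp only [hF2]; rw [div_eq_mul_inv]
    rw [this]
    exact (sect_integrable hγ0 ha).const_mul _
  have hsectval : ∀ a : ℝ, a ≠ 0 →
      (∫ y : ℝ, F2 (a, y)) = K * (Real.sin |a| * (|a| ^ ((1:ℝ)+γ))⁻¹) := by
    intro a ha
    have h1 : (∫ y : ℝ, F2 (a, y))
        = (a * Real.sin a) * ∫ y : ℝ, ((a^2 + y^2) ^ ((3+γ)/2))⁻¹ := by
      rw [← integral_const_mul]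
      congr 1
    rw [h1, sect_value hγ0 ha, a_sin_eq a]
    rw [← hK]
    calc |a| * Real.sin |a| * (|a| ^ (-((2:ℝ)+γ)) * K)
        = (|a| * |a| ^ (-((2:ℝ)+γ))) * Real.sin |a| * K := by ring
      _ = K * (Real.sin |a| * (|a| ^ ((1:ℝ)+γ))⁻¹) := by
          rw [abs_pow_helper hγ0 ha]; ring
  have hsectnorm : ∀ a : ℝ, a ≠ 0 →
      (∫ y : ℝ, ‖F2 (a, y)‖) = K * (abs (Real.sin |a|) * (|a| ^ ((1:ℝ)+γ))⁻¹) := by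
    intro a ha
    have h1 : (fun y : ℝ => ‖F2 (a, y)‖)
        = fun y => |a * Real.sin a| * ((a^2 + y^2) ^ ((3+γ)/2))⁻¹ := by
      funext y
      simp only [hF2, Real.norm_eq_abs]
      rw [abs_div, abs_of_nonneg (rpow_nonneg (by positivity) _), div_eq_mul_inv]
    rw [h1, integral_const_mul, sect_value hγ0 ha]
    have h2 : |a * Real.sin a| = |a| * abs (Real.sin |a|) := by
      rw [a_sin_eq a, abs_mul, abs_abs]
    rw [h2, ← hK]
    calc |a| * abs (Real.sin |a|) * (|a| ^ (-((2:ℝ)+γ)) * K)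
        = (|a| * |a| ^ (-((2:ℝ)+γ))) * abs (Real.sin |a|) * K := by ring
      _ = K * (abs (Real.sin |a|) * (|a| ^ ((1:ℝ)+γ))⁻¹) := by
          rw [abs_pow_helper hγ0 ha]; ring
  -- product integrability
  have hint2 : Integrable F2 ((volume : Measure ℝ).prod volume) := by
    refine (integrable_prod_iff hmeas).mpr ⟨?_, ?_⟩
    · filter_upwards [hae_ne] with a ha
      exact hsect a ha
    · apply (PhiInt hγ0 hγ1).congr
      symm
      filter_upwards [hae_ne] with a ha
      exact hsectnorm a ha
  have hfub := integral_prod F2 hint2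
  rw [MeasureTheory.Measure.volume_eq_prod, hfub]
  have h3 : (∫ a : ℝ, ∫ y : ℝ, F2 (a, y))
      = ∫ a : ℝ, K * (Real.sin |a| * (|a| ^ ((1:ℝ)+γ))⁻¹) := by
    apply integral_congr_ae
    filter_upwards [hae_ne] with a ha
    exact hsectval a ha
  rw [h3]
  have h4 := integral_comp_abs
    (f := fun u : ℝ => K * (Real.sin u * (u ^ ((1:ℝ)+γ))⁻¹))
  rw [h4, PsiIntIoi_eq hγ0]
  ring
end CgamAux
end CgammaHelpers

/-- **Positivity of the constant `C_γ` integrals.** For `γ ∈ (0,1)`,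
`∫₀^∞ sin h / h^{1+γ} dh > 0`, and
`∫_{ℝ²} h₁ sin h₁/(h₁²+h₂²)^{(3+γ)/2} dh₁dh₂ = K_γ · 2∫₀^∞ sin h / h^{1+γ} dh`
with `K_γ = ∫_ℝ (1+λ²)^{−(3+γ)/2} dλ`; in particular the planar integral is
strictly positive. -/
theorem Cgamma_integral_positive (γ : ℝ) (hγ : γ ∈ Set.Ioo (0:ℝ) 1) :
    (0 < ∫ h in Set.Ioi (0:ℝ), Real.sin h / h ^ (1+γ)) ∧
    (∫ p : ℝ × ℝ, p.1 * Real.sin p.1 / (p.1^2 + p.2^2) ^ ((3+γ)/2)) =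
      (∫ l : ℝ, (1 + l^2) ^ (-(3+γ)/2)) *
        (2 * ∫ h in Set.Ioi (0:ℝ), Real.sin h / h ^ (1+γ)) ∧
    (0 < ∫ p : ℝ × ℝ, p.1 * Real.sin p.1 / (p.1^2 + p.2^2) ^ ((3+γ)/2)) := by
  obtain ⟨hγ0, hγ1⟩ := hγ
  have h1 := CgamAux.part1 hγ0 hγ1
  have h2 := CgamAux.main hγ0 hγ1
  have hK := CgamAux.Kpos hγ0
  exact ⟨h1, h2, by rw [h2]; exact mul_pos hK (by linarith)⟩
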